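/- arXiv:2509.02562 — 2 statements merged into one kernel-verified Lean document; each statement's English description precedes it below -/
import Mathlib

section
/- Given any array of points (x_i^h)_{i,h≥1} in T_n^d, for every p ∈ ℕ and every k ∈ ℕ one has B^{p+1}(k) = ⋃_{i=1}^k ⋃_{1 ≤ h ≤ H_i^{p+1}} B̄(x_i^h, k−i), and likewise B^*(k) = ⋃_{i=1}^k ⋃_{1 ≤ h ≤ H_i^*} B̄(x_i^h, k−i) (unions over all integers h with 1 ≤ h ≤ the possibly infinite index). -/
open MeasureTheory ProbabilityTheory Filter

/-- The discrete torus graph on `(ℤ/nℤ)^d`. -/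
def torusGraph (d n : ℕ) : SimpleGraph (Fin d → ZMod n) where
  Adj x y := x ≠ y ∧ ∃ i, (x i = y i + 1 ∨ y i = x i + 1) ∧ ∀ j, j ≠ i → x j = y j
  symm := by
    constructor
    rintro x y ⟨hne, i, hor, hj⟩
    exact ⟨hne.symm, i, hor.symm, fun j hji => (hj j hji).symm⟩
  loopless := by constructor; rintro x ⟨hne, -⟩; exact hne rfl

/-- Closed ball of radius `r` around `x` in the graph metric of the torus. -/
def torusBall (d n : ℕ) (x : Fin d → ZMod n) (r : ℕ) : Set (Fin d → ZMod n) :=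
  {y | (torusGraph d n).dist x y ≤ r}

/-- `burnedSet d n x k = ⋃_{i=1}^k B̄(x_i, k−i)`, with the `0`-indexed convention
`x i = x_{i+1}`. -/
def burnedSet (d n : ℕ) (x : ℕ → (Fin d → ZMod n)) (k : ℕ) : Set (Fin d → ZMod n) :=
  ⋃ i ∈ Finset.range k, torusBall d n (x i) (k - 1 - i)

/-- The burning number of the torus. -/
noncomputable def burningNumber (d n : ℕ) : ℕ :=
  sInf {k | 1 ≤ k ∧ ∃ x : ℕ → (Fin d → ZMod n), burnedSet d n x k = Set.univ}

/-- The first time at which the burning process covers the whole torus. -/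
noncomputable def burnTime (d n : ℕ) (x : ℕ → (Fin d → ZMod n)) : ℕ :=
  sInf {k | burnedSet d n x k = Set.univ}

open Classical in
/-- The intermediate burning processes `B^p(·)` constructed from the array `xs`
(`xs i h` stands for `x_{i+1}^{h+1}`): `B^0(k) = ∅` and `B^{p+1}(k) = ⋃_{i=1}^k
B̄(y_i^{p+1}, k−i)`, where `y_i^{p+1}` is the first point of `(x_i^h)_h` lying outside
`B^p(i−1)` (and `x_i^1` if there is none). -/
noncomputable def interB (d n : ℕ) (xs : ℕ → ℕ → (Fin d → ZMod n)) :
    ℕ → ℕ → Set (Fin d → ZMod n)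
  | 0, _ => ∅
  | (p + 1), k =>
      ⋃ i ∈ Finset.range k,
        torusBall d n
          (if h : ∃ m : ℕ, xs i m ∉ interB d n xs p i then xs i (Nat.find h) else xs i 0)
          (k - 1 - i)

open Classical in
/-- `interH d n xs p i` is `H_{i+1}^{p+1} = inf{h ≥ 1 : x_{i+1}^h ∉ B^p(i)} ∈ ℕ∞`,
recorded `0`-indexed (so `interH d n xs p i = h₀` corresponds to `H_{i+1}^{p+1} = h₀+1`). -/
noncomputable def interH (d n : ℕ) (xs : ℕ → ℕ → (Fin d → ZMod n)) (p i : ℕ) : ℕ∞ :=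
  if h : ∃ m : ℕ, xs i m ∉ interB d n xs p i then (Nat.find h : ℕ∞) else ⊤

open Classical in
/-- Auxiliary construction for the rejection-sampling process: `starYaux d n xs (k+1)`
agrees with `starYaux d n xs k` below index `k` and chooses `y_{k+1}^*` at index `k`. -/
noncomputable def starYaux (d n : ℕ) (xs : ℕ → ℕ → (Fin d → ZMod n)) :
    ℕ → ℕ → (Fin d → ZMod n)
  | 0, i => xs i 0
  | (k + 1), i =>
      if i = k then
        (if h : ∃ m : ℕ,
            xs k m ∉ ⋃ j ∈ Finset.range k, torusBall d n (starYaux d n xs k j) (k - 1 - j)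
          then xs k (Nat.find h) else xs k 0)
      else starYaux d n xs k i

/-- `starY d n xs i` is the point `y_{i+1}^*` of the rejection-sampling process. -/
noncomputable def starY (d n : ℕ) (xs : ℕ → ℕ → (Fin d → ZMod n)) (i : ℕ) :
    Fin d → ZMod n :=
  starYaux d n xs (i + 1) i

/-- The rejection-sampling burning process `B^*(k) = ⋃_{i=1}^k B̄(y_i^*, k−i)`. -/
noncomputable def starB (d n : ℕ) (xs : ℕ → ℕ → (Fin d → ZMod n)) (k : ℕ) :
    Set (Fin d → ZMod n) :=
  ⋃ i ∈ Finset.range k, torusBall d n (starY d n xs i) (k - 1 - i)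

open Classical in
/-- `starH d n xs i` is `H_{i+1}^* = inf{h ≥ 1 : x_{i+1}^h ∉ B^*(i)} ∈ ℕ∞`, recorded
`0`-indexed. -/
noncomputable def starH (d n : ℕ) (xs : ℕ → ℕ → (Fin d → ZMod n)) (i : ℕ) : ℕ∞ :=
  if h : ∃ m : ℕ, xs i m ∉ starB d n xs i then (Nat.find h : ℕ∞) else ⊤

/-!
Both processes have the shape `B(k) = ⋃_{i ≤ k} B̄(y_i, k − i)`, where `y_i` is the first
`x_i^h` escaping a set `S_i ⊆ B(i − 1)`: `S_i = B^p(i − 1)` for `B^{p+1}` (using that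
`B^p ⊆ B^{p+1}`) and `S_i = B^*(i − 1)` for `B^*`. A rejected point `x_i^h`, `h < H_i`, lies
in `S_i ⊆ B(i − 1)`, so by the triangle inequality on the (connected) torus its ball
`B̄(x_i^h, k − i)` is already contained in `B(k)`.

The inclusion `B^p ⊆ B^{p+1}` is proved by induction on `p` and then on `k`: if `y_i^{p+1}`
already lies in `B^{p+1}(i − 1)` its ball is covered, and otherwise it is also the first escape
from the larger set `B^{p+1}(i − 1)`, that is, `y_i^{p+2} = y_i^{p+1}`.
-/

namespace torusGraph

variable {d n : ℕ}

theorem reachable_add_single_one (u : Fin d → ZMod n) (i : Fin d) :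
    (torusGraph d n).Reachable u (u + Pi.single i 1) := by
  -- equality happens for `n = 1`, where the torus is a single point
  by_cases hu : u = u + Pi.single i 1
  · exact hu ▸ SimpleGraph.Reachable.refl u
  refine SimpleGraph.Adj.reachable ⟨hu, i, Or.inr (by simp), fun j hj => ?_⟩
  simp [Pi.single_eq_of_ne hj]

theorem reachable_add_single (u : Fin d → ZMod n) (i : Fin d) (v : ZMod n) :
    (torusGraph d n).Reachable u (u + Pi.single i v) := by
  obtain ⟨k, rfl⟩ := ZMod.intCast_surjective v
  have step (m : ℤ) : u + Pi.single i ((m + 1 : ℤ) : ZMod n)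
      = u + Pi.single i (m : ZMod n) + Pi.single i 1 := by
    rw [add_assoc, ← Pi.single_add]; push_cast; rfl
  induction k using Int.induction_on with
  | zero => simp
  | succ m ih => exact step m ▸ ih.trans (reachable_add_single_one _ i)
  | pred m ih =>
      have h := reachable_add_single_one (u + Pi.single i ((-m - 1 : ℤ) : ZMod n)) i
      rw [← step, sub_add_cancel] at h
      exact ih.trans h.symm

theorem connected : (torusGraph d n).Connected := by
  refine (SimpleGraph.connected_iff _).2 ⟨fun x y => ?_, ⟨0⟩⟩
  have h (s : Finset (Fin d)) :
      (torusGraph d n).Reachable x (x + ∑ i ∈ s, Pi.single i ((y - x) i)) := by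
    induction s using Finset.induction_on with
    | empty => simp
    | insert a s ha ih =>
        rw [Finset.sum_insert ha, add_comm (Pi.single _ _), ← add_assoc]
        exact ih.trans (reachable_add_single _ a _)
  simpa only [Finset.univ_sum_single, add_sub_cancel] using h Finset.univ

end torusGraph

section Balls

variable {d n : ℕ}

theorem torusBall_mono (c : Fin d → ZMod n) {r r' : ℕ} (h : r ≤ r') :
    torusBall d n c r ⊆ torusBall d n c r' :=
  fun _ hw => le_trans hw h

theorem torusBall_subset_of_mem {c z : Fin d → ZMod n} {r₁ : ℕ} (hz : z ∈ torusBall d n c r₁)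
    (r₂ : ℕ) : torusBall d n z r₂ ⊆ torusBall d n c (r₁ + r₂) :=
  fun _ hw => torusGraph.connected.dist_triangle.trans (add_le_add hz hw)

theorem torusBall_subset_burnedSet {Y : ℕ → Fin d → ZMod n} {i k : ℕ} (hik : i < k)
    {y : Fin d → ZMod n} (hy : Y i = y) : torusBall d n y (k - 1 - i) ⊆ burnedSet d n Y k :=
  hy ▸ Set.subset_biUnion_of_mem (u := fun j => torusBall d n (Y j) (k - 1 - j))
    (Finset.mem_coe.2 (Finset.mem_range.2 hik))

theorem torusBall_subset_burnedSet_of_mem {Y : ℕ → Fin d → ZMod n} {i k : ℕ} (hik : i < k)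
    {z : Fin d → ZMod n} (hz : z ∈ burnedSet d n Y i) :
    torusBall d n z (k - 1 - i) ⊆ burnedSet d n Y k := by
  simp only [burnedSet, Set.mem_iUnion, Finset.mem_range, exists_prop] at hz
  obtain ⟨j, hji, hzj⟩ := hz
  refine (torusBall_subset_of_mem hzj _).trans ((torusBall_mono _ ?_).trans
    (torusBall_subset_burnedSet (hji.trans hik) rfl))
  omega

end Balls

section Escape

open Classical

variable {α : Type*}

noncomputable def firstEscape (x : ℕ → α) (S : Set α) : α :=
  if h : ∃ m, x m ∉ S then x (Nat.find h) else x 0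

noncomputable def escapeIndex (x : ℕ → α) (S : Set α) : ℕ∞ :=
  if h : ∃ m, x m ∉ S then (Nat.find h : ℕ∞) else ⊤

theorem exists_le_escapeIndex_eq_firstEscape (x : ℕ → α) (S : Set α) :
    ∃ h : ℕ, (h : ℕ∞) ≤ escapeIndex x S ∧ x h = firstEscape x S := by
  by_cases hS : ∃ m, x m ∉ S
  · exact ⟨Nat.find hS, by simp [escapeIndex, firstEscape, hS]⟩
  · exact ⟨0, by simp [escapeIndex, firstEscape, hS]⟩

theorem mem_or_eq_firstEscape_of_le_escapeIndex {x : ℕ → α} {S : Set α} {h : ℕ}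
    (hh : (h : ℕ∞) ≤ escapeIndex x S) : x h ∈ S ∨ x h = firstEscape x S := by
  by_cases hS : ∃ m, x m ∉ S
  · simp only [escapeIndex, dif_pos hS, Nat.cast_le] at hh
    rcases hh.lt_or_eq with hlt | rfl
    · exact Or.inl (not_not.1 (Nat.find_min hS hlt))
    · exact Or.inr (by simp [firstEscape, hS])
  · exact Or.inl (not_not.1 (not_exists.1 hS h))

theorem firstEscape_eq_of_subset {x : ℕ → α} {S T : Set α} (hST : S ⊆ T)
    (hT : firstEscape x S ∉ T) : firstEscape x T = firstEscape x S := by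
  have hS : ∃ m, x m ∉ S := by
    by_contra hS
    exact hT (hST (by simpa [firstEscape, hS] using not_exists.1 hS 0))
  have hT' : ∃ m, x m ∉ T := ⟨Nat.find hS, by simpa [firstEscape, hS] using hT⟩
  simp only [firstEscape, dif_pos hS, dif_pos hT'] at hT ⊢
  exact congrArg x (le_antisymm (Nat.find_min' hT' hT)
    (Nat.find_min' hS fun hm => Nat.find_spec hT' (hST hm)))

end Escape

section Processes

variable {d n : ℕ}

theorem burnedSet_eq_iUnion_of_eq_firstEscape {xs : ℕ → ℕ → Fin d → ZMod n}
    {S : ℕ → Set (Fin d → ZMod n)} {Y : ℕ → Fin d → ZMod n}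
    (hY : ∀ i, Y i = firstEscape (xs i) (S i)) (hS : ∀ i, S i ⊆ burnedSet d n Y i) (k : ℕ) :
    burnedSet d n Y k
      = ⋃ i ∈ Finset.range k, ⋃ h : ℕ, ⋃ (_ : (h : ℕ∞) ≤ escapeIndex (xs i) (S i)),
          torusBall d n (xs i h) (k - 1 - i) := by
  refine Set.Subset.antisymm (Set.iUnion₂_mono fun i _ => ?_)
    (Set.iUnion₂_subset fun i hi => Set.iUnion₂_subset fun h hh => ?_)
  · obtain ⟨h, hh, hxh⟩ := exists_le_escapeIndex_eq_firstEscape (xs i) (S i)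
    rw [hY, ← hxh]
    exact Set.subset_iUnion₂_of_subset h hh subset_rfl
  · have hik := Finset.mem_range.1 hi
    rcases mem_or_eq_firstEscape_of_le_escapeIndex hh with hmem | heq
    · exact torusBall_subset_burnedSet_of_mem hik (hS i hmem)
    · exact torusBall_subset_burnedSet hik ((hY i).trans heq.symm)

theorem interB_succ_eq_burnedSet (xs : ℕ → ℕ → Fin d → ZMod n) (p : ℕ) :
    interB d n xs (p + 1) = burnedSet d n (fun i => firstEscape (xs i) (interB d n xs p i)) :=
  rfl

theorem interB_subset_succ (xs : ℕ → ℕ → Fin d → ZMod n) (p : ℕ) :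
    ∀ k, interB d n xs p k ⊆ interB d n xs (p + 1) k := by
  induction p with
  | zero => intro k; simp [interB]
  | succ p ih =>
    intro k
    induction k using Nat.strong_induction_on with
    | _ k IH =>
      rw [interB_succ_eq_burnedSet, interB_succ_eq_burnedSet xs (p + 1)]
      refine Set.iUnion₂_subset fun i hi => ?_
      have hik := Finset.mem_range.1 hi
      by_cases hy : firstEscape (xs i) (interB d n xs p i) ∈ interB d n xs (p + 1) i
      · exact torusBall_subset_burnedSet_of_mem hik (IH i hik hy)
      · exact torusBall_subset_burnedSet hik (firstEscape_eq_of_subset (ih i) hy)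

theorem starYaux_eq_starY (xs : ℕ → ℕ → Fin d → ZMod n) {m j : ℕ} (hj : j < m) :
    starYaux d n xs m j = starY d n xs j := by
  induction m with
  | zero => exact absurd hj j.not_lt_zero
  | succ m ih =>
    rcases (Nat.lt_succ_iff.1 hj).lt_or_eq with hlt | rfl
    · rw [starYaux, if_neg hlt.ne, ih hlt]
    · rfl

theorem starY_eq_firstEscape (xs : ℕ → ℕ → Fin d → ZMod n) (i : ℕ) :
    starY d n xs i = firstEscape (xs i) (starB d n xs i) := by
  have hB : ⋃ j ∈ Finset.range i, torusBall d n (starYaux d n xs i j) (i - 1 - j)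
      = starB d n xs i :=
    Set.iUnion₂_congr fun j hj => by rw [starYaux_eq_starY xs (Finset.mem_range.1 hj)]
  rw [starY, starYaux, if_pos rfl, hB]
  rfl

end Processes

theorem interB_starB_eq_union_general (d n : ℕ)
    (xs : ℕ → ℕ → (Fin d → ZMod n)) :
    ∀ p k : ℕ,
      (interB d n xs (p + 1) k
        = ⋃ i ∈ Finset.range k, ⋃ h : ℕ, ⋃ (_ : (h : ℕ∞) ≤ interH d n xs p i),
            torusBall d n (xs i h) (k - 1 - i)) ∧
      (starB d n xs k
        = ⋃ i ∈ Finset.range k, ⋃ h : ℕ, ⋃ (_ : (h : ℕ∞) ≤ starH d n xs i),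
            torusBall d n (xs i h) (k - 1 - i)) := fun p k =>
  -- `interB (p + 1)`, `interH` and `starH` unfold to `burnedSet`, `firstEscape` and `escapeIndex`
  ⟨burnedSet_eq_iUnion_of_eq_firstEscape (fun _ => rfl) (interB_subset_succ xs p) k,
    burnedSet_eq_iUnion_of_eq_firstEscape (starY_eq_firstEscape xs) (fun _ => subset_rfl) k⟩

/-- For any array of points `(x_i^h)` of the torus, every `p` and every
`k`: `B^{p+1}(k) = ⋃_{i=1}^k ⋃_{1 ≤ h ≤ H_i^{p+1}} B̄(x_i^h, k−i)`, and likewise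
`B^*(k) = ⋃_{i=1}^k ⋃_{1 ≤ h ≤ H_i^*} B̄(x_i^h, k−i)` (in the `0`-indexed conventions,
the inner unions run over `h : ℕ` with `(h : ℕ∞) ≤ interH`, resp. `(h : ℕ∞) ≤ starH`). -/
theorem interB_starB_eq_union (d n : ℕ) (hd : 1 ≤ d) (hn : 1 ≤ n)
    (xs : ℕ → ℕ → (Fin d → ZMod n)) :
    ∀ p k : ℕ,
      (interB d n xs (p + 1) k
        = ⋃ i ∈ Finset.range k, ⋃ h : ℕ, ⋃ (_ : (h : ℕ∞) ≤ interH d n xs p i),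
            torusBall d n (xs i h) (k - 1 - i)) ∧
      (starB d n xs k
        = ⋃ i ∈ Finset.range k, ⋃ h : ℕ, ⋃ (_ : (h : ℕ∞) ≤ starH d n xs i),
            torusBall d n (xs i h) (k - 1 - i)) :=
  interB_starB_eq_union_general d n xs
end

section
/- There exists a constant C = C(d) ∈ (1,∞) (in fact C = 8^d works) such that for every ε ∈ (0,∞) there exists N such that for all n ≥ N the following holds: setting r_k = ε·n^{d/(d+1)}·2^{−k} for k ≥ 1 and ℓ = ⌊(2/3)·log₂(ε·n^{d/(d+1)})⌋, there exist partitions P_1, P_2, …, P_ℓ of the vertex set of T_n^d such that P_{k+1} refines P_k for each 1 ≤ k ≤ ℓ−1, and for each 1 ≤ k ≤ ℓ every block A of P_k has diameter at most C·r_k in the graph metric of T_n^d and cardinality satisfying r_k^d ≤ #A ≤ C·r_k^d. -/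
open MeasureTheory ProbabilityTheory Filter

/-!
Cut each coordinate circle `ℤ/nℤ` into consecutive arcs of length `s`, the last arc absorbing
the remainder, so that every arc has between `s` and `2s` points. Products of arcs partition
`T_n^d` into boxes of diameter at most `2ds` with between `s^d` and `(2s)^d` points. Doubling `s`
merges the arcs in pairs, so the box partition of side `s` refines that of side `2s`. The side
`s_k = 2^(ℓ-k) ⌈r_ℓ⌉` satisfies `s_k = 2 s_(k+1)` and lies in `[r_k, 2 r_k]` because `r_ℓ ≥ 1`;
it is at most `n` once `n ≥ ε^(d+1)`, and the constant `C = 4^d` then works.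
-/

def blockIndex (n s t : ℕ) : ℕ := min (t / s) (n / s - 1)

lemma blockIndex_two_mul (n s t : ℕ) :
    blockIndex n (2 * s) t = min (blockIndex n s t / 2) (n / (2 * s) - 1) := by
  simp only [blockIndex, mul_comm 2 s, ← Nat.div_div_eq_div_mul]
  omega

lemma blockIndex_lt {n s : ℕ} (hs : 0 < s) (hsn : s ≤ n) (t : ℕ) : blockIndex n s t < n / s := by
  have := Nat.div_pos hsn hs
  unfold blockIndex; omega

lemma blockIndex_mem_Ico {n s t : ℕ} (hs : 0 < s) (ht : t < n) :
    t ∈ Finset.Ico (blockIndex n s t * s) (blockIndex n s t * s + 2 * s) := by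
  set j := blockIndex n s t
  have hj : j = min (t / s) (n / s - 1) := rfl
  have hjt : j * s ≤ t :=
    (Nat.mul_le_mul_right s (min_le_left _ _)).trans (Nat.div_mul_le_self t s)
  have htj : t < j * s + 2 * s := by
    rcases eq_or_lt_of_le (min_le_left (t / s) (n / s - 1)) with h | h
    · have := Nat.lt_div_mul_add (a := t) hs; rw [hj, h]; omega
    · have hnj : n / s ≤ j + 1 := by omega
      calc t < n := ht
        _ < n / s * s + s := Nat.lt_div_mul_add hs
        _ ≤ (j + 1) * s + s := by gcongr
        _ = j * s + 2 * s := by ring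
  exact Finset.mem_Ico.mpr ⟨hjt, htj⟩

lemma blockIndex_eq_of_mem_Ico {n s j t : ℕ} (hj : j < n / s)
    (ht : t ∈ Finset.Ico (j * s) (j * s + s)) : blockIndex n s t = j := by
  rw [Finset.mem_Ico] at ht
  have : t / s = j := Nat.div_eq_of_lt_le ht.1 (by linarith [ht.2])
  unfold blockIndex; omega

lemma natDist_le_of_blockIndex_eq {n s u v : ℕ} (hs : 0 < s) (hu : u < n) (hv : v < n)
    (h : blockIndex n s u = blockIndex n s v) : Nat.dist u v ≤ 2 * s := by
  have hu' := Finset.mem_Ico.mp (blockIndex_mem_Ico hs hu)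
  have hv' := Finset.mem_Ico.mp (blockIndex_mem_Ico hs hv)
  rw [h] at hu'
  unfold Nat.dist; omega

lemma ncard_blockIndex_fiber_mem_Icc {n s j : ℕ} [NeZero n] (hs : 0 < s) (hj : j < n / s) :
    {z : ZMod n | blockIndex n s z.val = j}.ncard ∈ Set.Icc s (2 * s) := by
  have hcast : ∀ t < n, (t : ZMod n).val = t := fun t ht => ZMod.val_cast_of_lt ht
  have hlt : j * s + s ≤ n := by
    calc j * s + s = (j + 1) * s := by ring
      _ ≤ n / s * s := by gcongr; exact hj
      _ ≤ n := Nat.div_mul_le_self n s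
  constructor
  · have hsub : ((Finset.Ico (j * s) (j * s + s)).image (Nat.cast : ℕ → ZMod n) : Set (ZMod n)) ⊆
        {z | blockIndex n s z.val = j} := by
      intro z hz
      simp only [Finset.coe_image, Set.mem_image, Finset.mem_coe] at hz
      obtain ⟨t, ht, rfl⟩ := hz
      rw [Set.mem_ofPred_eq, hcast t (by rw [Finset.mem_Ico] at ht; omega)]
      exact blockIndex_eq_of_mem_Ico hj ht
    refine le_trans ?_ (Set.ncard_le_ncard hsub)
    rw [Set.ncard_coe_finset, Finset.card_image_of_injOn, Nat.card_Ico, Nat.add_sub_cancel_left]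
    intro a ha b hb hab
    simp only [Finset.coe_Ico, Set.mem_Ico] at ha hb
    rw [← hcast a (by omega), ← hcast b (by omega), hab]
  · have hsub : {z : ZMod n | blockIndex n s z.val = j} ⊆
        ((Finset.Ico (j * s) (j * s + 2 * s)).image (Nat.cast : ℕ → ZMod n) : Set (ZMod n)) := by
      intro z hz
      rw [Set.mem_ofPred_eq] at hz
      simp only [Finset.coe_image, Set.mem_image, Finset.mem_coe]
      exact ⟨z.val, hz ▸ blockIndex_mem_Ico hs (ZMod.val_lt z), ZMod.natCast_zmod_val z⟩
    refine (Set.ncard_le_ncard hsub).trans ?_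
    rw [Set.ncard_coe_finset]
    exact Finset.card_image_le.trans (by simp)

namespace torusGraph

variable {d n : ℕ}

lemma edist_update_add_one_le (x : Fin d → ZMod n) (i : Fin d) :
    (torusGraph d n).edist x (Function.update x i (x i + 1)) ≤ 1 := by
  refine SimpleGraph.edist_le_one_iff_adj_or_eq.mpr (or_iff_not_imp_right.mpr fun hne => ?_)
  refine ⟨hne, i, Or.inr (by rw [Function.update_self]), fun j hj => ?_⟩
  rw [Function.update_of_ne hj]

lemma edist_update_add_natCast_le (x : Fin d → ZMod n) (i : Fin d) (m : ℕ) :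
    (torusGraph d n).edist x (Function.update x i (x i + m)) ≤ m := by
  induction m with
  | zero => simp
  | succ m ih =>
    have hstep := edist_update_add_one_le (Function.update x i (x i + m)) i
    rw [Function.update_self, Function.update_idem, add_assoc] at hstep
    push_cast
    exact (SimpleGraph.edist_triangle ..).trans (add_le_add ih hstep)

lemma edist_update_le [NeZero n] (x : Fin d → ZMod n) (i : Fin d) (b : ZMod n) :
    (torusGraph d n).edist x (Function.update x i b) ≤ Nat.dist (x i).val b.val := by
  have key : ∀ a b : ZMod n, a.val ≤ b.val → b = a + ((b.val - a.val : ℕ) : ZMod n) := by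
    intro a b hab
    rw [Nat.cast_sub hab, ZMod.natCast_zmod_val, ZMod.natCast_zmod_val]; ring
  rcases le_total (x i).val b.val with h | h
  · have := edist_update_add_natCast_le x i (b.val - (x i).val)
    rw [← key _ _ h] at this
    exact this.trans (Nat.cast_le.mpr (by unfold Nat.dist; omega))
  · have := edist_update_add_natCast_le (Function.update x i b) i ((x i).val - b.val)
    rw [Function.update_self, Function.update_idem, ← key _ _ h, Function.update_eq_self,
      SimpleGraph.edist_comm] at this
    exact this.trans (Nat.cast_le.mpr (by unfold Nat.dist; omega))

lemma edist_le_sum [NeZero n] (x y : Fin d → ZMod n) :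
    (torusGraph d n).edist x y ≤ ∑ i, Nat.dist (x i).val (y i).val := by
  suffices ∀ S : Finset (Fin d), ∀ x, (∀ i ∉ S, x i = y i) →
      (torusGraph d n).edist x y ≤ ∑ i ∈ S, Nat.dist (x i).val (y i).val from
    this Finset.univ x (by simp)
  intro S
  induction S using Finset.induction with
  | empty => intro x hx; simp [funext fun i => hx i (Finset.notMem_empty i)]
  | insert a S ha ih =>
    intro x hx
    have hrest := ih (Function.update x a (y a)) fun i hi => by
      rcases eq_or_ne i a with rfl | hne
      · rw [Function.update_self]
      · rw [Function.update_of_ne hne]; exact hx i (by simp [hi, hne])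
    rw [Finset.sum_congr rfl fun i hi => by
      rw [Function.update_of_ne (ne_of_mem_of_not_mem hi ha)]] at hrest
    rw [Finset.sum_insert ha, Nat.cast_add]
    exact (SimpleGraph.edist_triangle ..).trans (add_le_add (edist_update_le x a (y a)) hrest)

lemma dist_le_sum [NeZero n] (x y : Fin d → ZMod n) :
    (torusGraph d n).dist x y ≤ ∑ i, Nat.dist (x i).val (y i).val :=
  ENat.toNat_le_of_le_natCast (by exact_mod_cast edist_le_sum x y)

end torusGraph

lemma Setoid.exists_superset_of_le {α : Type*} {r r' : Setoid α} (h : r ≤ r') {A : Set α}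
    (hA : A ∈ r.classes) : ∃ B ∈ r'.classes, A ⊆ B := by
  obtain ⟨y, rfl⟩ := hA
  exact ⟨_, r'.mem_classes y, fun x hx => Setoid.le_def.mp h hx⟩

lemma Set.ncard_univ_pi {ι α : Type*} [Fintype ι] (t : ι → Set α) :
    (Set.univ.pi t).ncard = ∏ i, (t i).ncard := by
  rw [← Nat.card_coe_set_eq, Nat.card_congr (Equiv.Set.univPi t), Nat.card_pi]
  simp only [Nat.card_coe_set_eq]

section boxPartition

variable {d n s : ℕ}

def boxPartition (d n s : ℕ) : Set (Set (Fin d → ZMod n)) :=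
  (Setoid.ker fun (x : Fin d → ZMod n) i => blockIndex n s (x i).val).classes

lemma boxPartition_refines {A : Set (Fin d → ZMod n)} (hA : A ∈ boxPartition d n s) :
    ∃ B ∈ boxPartition d n (2 * s), A ⊆ B := by
  refine Setoid.exists_superset_of_le (fun x y hxy => ?_) hA
  funext i
  simp only [Setoid.ker_def] at hxy ⊢
  rw [blockIndex_two_mul, blockIndex_two_mul, congrFun hxy i]

lemma eq_univ_pi_of_mem_boxPartition {A : Set (Fin d → ZMod n)} (hA : A ∈ boxPartition d n s) :
    ∃ x : Fin d → ZMod n,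
      A = Set.univ.pi fun i => {z | blockIndex n s z.val = blockIndex n s (x i).val} := by
  obtain ⟨x, rfl⟩ := hA
  exact ⟨x, by ext y; simp [Setoid.ker_def, funext_iff]⟩

lemma ncard_mem_Icc_of_mem_boxPartition [NeZero n] (hs : 0 < s) (hsn : s ≤ n)
    {A : Set (Fin d → ZMod n)} (hA : A ∈ boxPartition d n s) :
    A.ncard ∈ Set.Icc (s ^ d) ((2 * s) ^ d) := by
  obtain ⟨x, rfl⟩ := eq_univ_pi_of_mem_boxPartition hA
  have hfiber i := ncard_blockIndex_fiber_mem_Icc (n := n) hs (blockIndex_lt hs hsn (x i).val)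
  rw [Set.ncard_univ_pi]
  constructor
  · simpa using Finset.prod_le_prod' (s := Finset.univ) fun i _ => (hfiber i).1
  · simpa using Finset.prod_le_prod' (s := Finset.univ) fun i _ => (hfiber i).2

lemma dist_le_of_mem_boxPartition [NeZero n] (hs : 0 < s) {A : Set (Fin d → ZMod n)}
    (hA : A ∈ boxPartition d n s) {x y : Fin d → ZMod n} (hx : x ∈ A) (hy : y ∈ A) :
    (torusGraph d n).dist x y ≤ d * (2 * s) := by
  obtain ⟨z, rfl⟩ := eq_univ_pi_of_mem_boxPartition hA
  calc (torusGraph d n).dist x y ≤ ∑ i, Nat.dist (x i).val (y i).val := torusGraph.dist_le_sum x y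
    _ ≤ ∑ _i : Fin d, 2 * s := Finset.sum_le_sum fun i _ =>
      natDist_le_of_blockIndex_eq hs (ZMod.val_lt _) (ZMod.val_lt _)
        ((hx i trivial).trans (hy i trivial).symm)
    _ = d * (2 * s) := by simp

lemma boxPartition_block_bounds {r : ℝ} (hr : 0 < r) (hrs : r ≤ s) (hsr : (s : ℝ) ≤ 2 * r)
    (hsn : s ≤ n) {A : Set (Fin d → ZMod n)} (hA : A ∈ boxPartition d n s) :
    (∀ x ∈ A, ∀ y ∈ A, ((torusGraph d n).dist x y : ℝ) ≤ 4 ^ d * r) ∧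
      r ^ d ≤ (A.ncard : ℝ) ∧ (A.ncard : ℝ) ≤ 4 ^ d * r ^ d := by
  have hs : 0 < s := by exact_mod_cast hr.trans_le hrs
  have : NeZero n := ⟨by omega⟩
  obtain ⟨hlow, hhigh⟩ := ncard_mem_Icc_of_mem_boxPartition hs hsn hA
  refine ⟨fun x hx y hy => ?_, ?_, ?_⟩
  · calc ((torusGraph d n).dist x y : ℝ) ≤ d * (2 * s) := by
          exact_mod_cast dist_le_of_mem_boxPartition hs hA hx hy
      _ ≤ d * (2 * (2 * r)) := by gcongr
      _ = (4 * d : ℕ) * r := by push_cast; ring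
      _ ≤ 4 ^ d * r := by gcongr; exact_mod_cast Nat.mul_le_pow (by norm_num) d
  · calc r ^ d ≤ (s : ℝ) ^ d := by gcongr
      _ ≤ A.ncard := by exact_mod_cast hlow
  · calc (A.ncard : ℝ) ≤ (2 * s : ℝ) ^ d := by exact_mod_cast hhigh
      _ ≤ (2 * (2 * r)) ^ d := by gcongr
      _ = 4 ^ d * r ^ d := by rw [← mul_pow]; ring

end boxPartition

noncomputable def dyadicSide (R : ℝ) (L k : ℕ) : ℕ := 2 ^ (L - k) * ⌈R / 2 ^ L⌉₊

lemma dyadicSide_eq_two_mul {R : ℝ} {L k : ℕ} (hk : k < L) :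
    dyadicSide R L k = 2 * dyadicSide R L (k + 1) := by
  rw [dyadicSide, dyadicSide, ← mul_assoc, ← pow_succ', Nat.sub_add_eq,
    Nat.sub_add_cancel (by omega)]

lemma dyadicSide_mem_Icc {R : ℝ} {L k : ℕ} (hR : 2 ^ L ≤ R) (hk : k ≤ L) :
    (dyadicSide R L k : ℝ) ∈ Set.Icc (R / 2 ^ k) (2 * (R / 2 ^ k)) := by
  have hscale : R / 2 ^ k = 2 ^ (L - k) * (R / 2 ^ L) := by
    rw [← Nat.sub_add_cancel hk, pow_add, Nat.add_sub_cancel]; field_simp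
  have hone : 1 ≤ R / 2 ^ L := (one_le_div (by positivity)).mpr hR
  rw [hscale, dyadicSide, Nat.cast_mul, Nat.cast_pow, Nat.cast_ofNat]
  constructor
  · gcongr; exact Nat.le_ceil _
  · rw [mul_left_comm]; gcongr; exact Nat.ceil_le_two_mul (by linarith)

lemma two_pow_floor_mul_logb_le {R c : ℝ} (hR : 0 < R) (hc₀ : 0 ≤ c) (hc₁ : c ≤ 1)
    (hpos : 0 < ⌊c * Real.logb 2 R⌋₊) : (2 : ℝ) ^ ⌊c * Real.logb 2 R⌋₊ ≤ R := by
  have hone : 1 ≤ c * Real.logb 2 R := Nat.floor_pos.mp hpos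
  have hfloor := Nat.floor_le (zero_le_one.trans hone)
  have hlog : 0 ≤ Real.logb 2 R := by by_contra! h; nlinarith
  rw [← Real.rpow_natCast, ← Real.le_logb_iff_rpow_le one_lt_two hR]
  linarith [mul_le_of_le_one_left hlog hc₁]

lemma mul_rpow_div_succ_le {ε x : ℝ} (hε : 0 ≤ ε) (hx : 0 ≤ x) (d : ℕ) (h : ε ^ (d + 1) ≤ x) :
    ε * x ^ ((d : ℝ) / (d + 1)) ≤ x := by
  have hroot : ε ≤ x ^ ((d + 1 : ℕ) : ℝ)⁻¹ := by
    calc ε = (ε ^ (d + 1)) ^ ((d + 1 : ℕ) : ℝ)⁻¹ :=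
          (Real.pow_rpow_inv_natCast hε (by omega)).symm
      _ ≤ x ^ ((d + 1 : ℕ) : ℝ)⁻¹ := by gcongr
  have hexp : ((d + 1 : ℕ) : ℝ)⁻¹ + d / (d + 1) = 1 := by push_cast; field_simp; ring
  calc ε * x ^ ((d : ℝ) / (d + 1)) ≤ x ^ ((d + 1 : ℕ) : ℝ)⁻¹ * x ^ ((d : ℝ) / (d + 1)) := by
        gcongr
    _ = x := by rw [← Real.rpow_add' hx (by rw [hexp]; norm_num), hexp, Real.rpow_one]

/-- There is a constant `C = C(d) ∈ (1,∞)` such that for every `ε > 0`,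
for all sufficiently large `n`, setting `r_k = ε·n^{d/(d+1)}·2^{−k}` and
`ℓ = ⌊(2/3)·log₂(ε·n^{d/(d+1)})⌋`, there exist partitions `P_1, …, P_ℓ` of the vertex set
of `T_n^d` such that each `P_{k+1}` refines `P_k`, and every block `A` of `P_k` has diameter
at most `C·r_k` in the graph metric and cardinality `r_k^d ≤ #A ≤ C·r_k^d`. -/
theorem nested_partitions (d : ℕ) (hd : 1 ≤ d) :
    ∃ C : ℝ, 1 < C ∧
      ∀ ε > (0 : ℝ), ∃ N : ℕ, ∀ n ≥ N,
        ∃ P : ℕ → Set (Set (Fin d → ZMod n)),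
          (∀ k : ℕ, 1 ≤ k →
              k ≤ ⌊(2 / 3 : ℝ) * Real.logb 2 (ε * (n : ℝ) ^ ((d : ℝ) / (d + 1)))⌋₊ →
            Setoid.IsPartition (P k) ∧
            ∀ A ∈ P k,
              (∀ x ∈ A, ∀ y ∈ A,
                ((torusGraph d n).dist x y : ℝ)
                  ≤ C * (ε * (n : ℝ) ^ ((d : ℝ) / (d + 1)) / 2 ^ k)) ∧
              (ε * (n : ℝ) ^ ((d : ℝ) / (d + 1)) / 2 ^ k) ^ d ≤ (A.ncard : ℝ) ∧
              (A.ncard : ℝ) ≤ C * (ε * (n : ℝ) ^ ((d : ℝ) / (d + 1)) / 2 ^ k) ^ d) ∧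
          (∀ k : ℕ, 1 ≤ k →
              k + 1 ≤ ⌊(2 / 3 : ℝ) * Real.logb 2 (ε * (n : ℝ) ^ ((d : ℝ) / (d + 1)))⌋₊ →
            ∀ A ∈ P (k + 1), ∃ B ∈ P k, A ⊆ B) := by
  refine ⟨4 ^ d, one_lt_pow₀ (by norm_num) (by omega), fun ε hε => ⟨⌈ε ^ (d + 1)⌉₊, fun n hn => ?_⟩⟩
  have hn₀ : 0 < n := hn.trans_lt' (Nat.ceil_pos.mpr (by positivity))
  set R := ε * (n : ℝ) ^ ((d : ℝ) / (d + 1))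
  set L := ⌊(2 / 3 : ℝ) * Real.logb 2 R⌋₊
  have hR : 0 < R := by positivity
  have hRn : R ≤ n := mul_rpow_div_succ_le hε.le n.cast_nonneg d (Nat.ceil_le.mp hn)
  refine ⟨fun k => boxPartition d n (dyadicSide R L k), fun k hk hkL => ?_, fun k _ hkL A hA => ?_⟩
  · obtain ⟨hlow, hhigh⟩ :=
      dyadicSide_mem_Icc (two_pow_floor_mul_logb_le hR (by norm_num) (by norm_num) (by omega)) hkL
    have hsn : (dyadicSide R L k : ℝ) ≤ n := by
      calc (dyadicSide R L k : ℝ) ≤ 2 * (R / 2 ^ k) := hhigh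
        _ ≤ 2 * (R / 2 ^ 1) := by gcongr; norm_num
        _ = R := by ring
        _ ≤ n := hRn
    exact ⟨Setoid.isPartition_classes _, fun A hA =>
      boxPartition_block_bounds (by positivity) hlow hhigh (by exact_mod_cast hsn) hA⟩
  · dsimp only at hA ⊢
    rw [dyadicSide_eq_two_mul (by omega)]
    exact boxPartition_refines hA
end
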